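/- arXiv:2209.08040 — 4 statements merged into one kernel-verified Lean document; each statement's English description precedes it below -/
import Mathlib

section
/- (Accuracy Rashomon set covers Balanced Accuracy Rashomon set) Let q⁺, q⁻ ∈ (0,1), q⁺ + q⁻ = 1, q_min = min(q⁺,q⁻), q_max = max(q⁺,q⁻), λ ≥ 0 and depth limit d so that H_t ≤ 2^d for all trees t. Define B_δ = {t : (FPR_t + FNR_t)/2 + λH_t ≤ δ} and A_θ = {t : q⁻FPR_t + q⁺FNR_t + λH_t ≤ θ}. If θ ≥ min(2q_max·δ, q_max + (2δ−1)q_min + (1 − 2q_min)·λ·2^d), then B_δ ⊆ A_θ. -/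
/-!
Write `M = max q⁺ q⁻` and `m = min q⁺ q⁻`, so `M + m = 1`. Weighting the two error rates by
their larger coefficient gives `q⁻ FPR + q⁺ FNR + λH ≤ 2M · ((FPR + FNR)/2 + λH) ≤ 2Mδ`, using
`2M ≥ 1`. Weighting them by the smaller one instead costs at most `M - m` (the rates are at
most `1`), and then `q⁻ FPR + q⁺ FNR + λH ≤ M + (2δ - 1) m + (1 - 2m) λH`, where `λH ≤ λ 2^d`
and `1 - 2m ≥ 0`. So the accuracy objective is below both bounds, hence below `θ`.
-/

lemma mul_add_mul_le_max_mul_add {a b x y : ℝ} (hx : 0 ≤ x) (hy : 0 ≤ y) :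
    a * x + b * y ≤ max a b * (x + y) := by
  nlinarith [mul_le_mul_of_nonneg_right (le_max_left a b) hx,
    mul_le_mul_of_nonneg_right (le_max_right a b) hy]

lemma mul_add_mul_le_min_mul_add_sub {a b x y : ℝ} (hx : x ≤ 1) (hy : y ≤ 1) :
    a * x + b * y ≤ min a b * (x + y) + (max a b - min a b) := by
  rcases le_total a b with hab | hab
  · rw [min_eq_left hab, max_eq_right hab]
    nlinarith [mul_le_mul_of_nonneg_left hy (sub_nonneg.mpr hab)]
  · rw [min_eq_right hab, max_eq_left hab]
    nlinarith [mul_le_mul_of_nonneg_left hx (sub_nonneg.mpr hab)]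

lemma weighted_add_le_two_max_mul_balanced_add {a b x y r : ℝ} (hab : a + b = 1)
    (hx : 0 ≤ x) (hy : 0 ≤ y) (hr : 0 ≤ r) :
    a * x + b * y + r ≤ 2 * max a b * ((x + y) / 2 + r) := by
  have htwo : 1 ≤ 2 * max a b := by
    linarith [le_max_left a b, le_max_right a b]
  nlinarith [mul_add_mul_le_max_mul_add (a := a) (b := b) hx hy]

lemma weighted_add_le_of_balanced_add_le {a b x y r R δ : ℝ} (hab : a + b = 1)
    (ha : 0 ≤ a) (hb : 0 ≤ b) (hx : x ≤ 1) (hy : y ≤ 1) (hrR : r ≤ R)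
    (hbal : (x + y) / 2 + r ≤ δ) :
    a * x + b * y + r ≤
      max a b + (2 * δ - 1) * min a b + (1 - 2 * min a b) * R := by
  have hmin : 0 ≤ min a b := le_min ha hb
  have hmax_add_min : max a b + min a b = 1 := by rw [max_add_min, hab]
  have hmin_le_max : min a b ≤ max a b := min_le_max
  nlinarith [mul_add_mul_le_min_mul_add_sub (a := a) (b := b) hx hy,
    mul_le_mul_of_nonneg_left hbal hmin,
    mul_le_mul_of_nonneg_left hrR (by linarith : (0 : ℝ) ≤ 1 - 2 * min a b)]

theorem accuracy_covers_balanced_accuracy_general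
    (qp qm lam δ θ : ℝ) (d : ℕ)
    (hqp0 : 0 < qp) (hqm0 : 0 < qm)
    (hsum : qp + qm = 1) (hlam : 0 ≤ lam)
    (hθ : θ ≥ min (2 * max qp qm * δ)
        (max qp qm + (2 * δ - 1) * min qp qm + (1 - 2 * min qp qm) * lam * 2 ^ d)) :
    ∀ FPR FNR H : ℝ,
      0 ≤ FPR → FPR ≤ 1 → 0 ≤ FNR → FNR ≤ 1 →
      1 ≤ H → H ≤ 2 ^ d →
      (FPR + FNR) / 2 + lam * H ≤ δ →
      qm * FPR + qp * FNR + lam * H ≤ θ := by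
  intro FPR FNR H hFPR0 hFPR1 hFNR0 hFNR1 hH1 hHd hbal
  have hsum' : qm + qp = 1 := by linarith
  rw [max_comm qp qm, min_comm qp qm] at hθ
  have hbound₁ : qm * FPR + qp * FNR + lam * H ≤ 2 * max qm qp * δ :=
    (weighted_add_le_two_max_mul_balanced_add hsum' hFPR0 hFNR0 (by positivity)).trans
      (mul_le_mul_of_nonneg_left hbal (by linarith [le_max_left qm qp]))
  have hbound₂ := weighted_add_le_of_balanced_add_le hsum' hqm0.le hqp0.le hFPR1 hFNR1
    (mul_le_mul_of_nonneg_left hHd hlam) hbal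
  rw [← mul_assoc] at hbound₂
  exact (le_min hbound₁ hbound₂).trans hθ

/-- Accuracy Rashomon set covers Balanced Accuracy Rashomon set: any tree
(described by its rates FPR, FNR and leaf count H with 1 ≤ H ≤ 2^d) in the
Balanced Accuracy Rashomon set B_δ belongs to the Accuracy Rashomon set A_θ,
provided θ ≥ min(2 q_max δ, q_max + (2δ-1) q_min + (1 - 2 q_min) λ 2^d). -/
theorem accuracy_covers_balanced_accuracy
    (qp qm lam δ θ : ℝ) (d : ℕ)
    (hqp0 : 0 < qp) (hqp1 : qp < 1) (hqm0 : 0 < qm) (hqm1 : qm < 1)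
    (hsum : qp + qm = 1) (hlam : 0 ≤ lam)
    (hθ : θ ≥ min (2 * max qp qm * δ)
        (max qp qm + (2 * δ - 1) * min qp qm + (1 - 2 * min qp qm) * lam * 2 ^ d)) :
    ∀ FPR FNR H : ℝ,
      0 ≤ FPR → FPR ≤ 1 → 0 ≤ FNR → FNR ≤ 1 →
      1 ≤ H → H ≤ 2 ^ d →
      (FPR + FNR) / 2 + lam * H ≤ δ →
      qm * FPR + qp * FNR + lam * H ≤ θ :=
  accuracy_covers_balanced_accuracy_general qp qm lam δ θ d hqp0 hqm0 hsum hlam hθ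
end

section
/- Suppose q⁺, q⁻ ∈ (0,1), q⁺ + q⁻ = 1, FPR, FNR ∈ [0,1], FPR ≤ 1, and 2q⁺ + q⁻FPR − q⁺FNR > 0 with FNR < 1. Let f1 = (q⁻FPR + q⁺FNR)/(2q⁺ + q⁻FPR − q⁺FNR). Then q⁻FPR + q⁺FNR ≤ 2f1/(1 + f1). -/
/-!
With `L = q⁻FPR + q⁺FNR` and `S = q⁺ + q⁻FPR`, the F1 denominator is
`2q⁺ + q⁻FPR − q⁺FNR = 2S − L`, so `f1 = L / (2S − L)` and `2 f1 / (1 + f1) = L / S`.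
Since `0 < S ≤ q⁺ + q⁻ = 1`, dividing `L ≥ 0` by `S` can only increase it.
-/

theorem two_mul_div_one_add_div_two_mul_sub {K : Type*} [Field K] [NeZero (2 : K)] (a b : K)
    (h : 2 * b - a ≠ 0) : 2 * (a / (2 * b - a)) / (1 + a / (2 * b - a)) = a / b := by
  rw [one_add_div h, sub_add_cancel, ← mul_div_assoc, div_div_div_cancel_right₀ h,
    mul_div_mul_left _ _ two_ne_zero]

theorem weighted_loss_le_f1_ratio_case2_general
    (qp qm FPR FNR f1 : ℝ)
    (hqp0 : 0 < qp) (hqm0 : 0 < qm)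
    (hsum : qp + qm = 1)
    (hFPR0 : 0 ≤ FPR) (hFPR1 : FPR ≤ 1) (hFNR0 : 0 ≤ FNR)
    (hD : 0 < 2 * qp + qm * FPR - qp * FNR)
    (hf1 : f1 = (qm * FPR + qp * FNR) / (2 * qp + qm * FPR - qp * FNR)) :
    qm * FPR + qp * FNR ≤ 2 * f1 / (1 + f1) := by
  have hdenom : 2 * qp + qm * FPR - qp * FNR = 2 * (qp + qm * FPR) - (qm * FPR + qp * FNR) := by
    ring
  have hS1 : qp + qm * FPR ≤ 1 :=
    hsum ▸ add_le_add_right (mul_le_of_le_one_right hqm0.le hFPR1) qp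
  rw [hf1, hdenom, two_mul_div_one_add_div_two_mul_sub _ _ (hdenom ▸ hD.ne')]
  exact le_div_self (by positivity) (by positivity) hS1

/-- Case 2 inequality of the F1 coverage theorem: the weighted
misclassification loss is at most `2 f1 / (1 + f1)`. -/
theorem weighted_loss_le_f1_ratio_case2
    (qp qm FPR FNR f1 : ℝ)
    (hqp0 : 0 < qp) (hqp1 : qp < 1) (hqm0 : 0 < qm) (hqm1 : qm < 1)
    (hsum : qp + qm = 1)
    (hFPR0 : 0 ≤ FPR) (hFPR1 : FPR ≤ 1) (hFNR0 : 0 ≤ FNR) (hFNR1 : FNR ≤ 1)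
    (hD : 0 < 2 * qp + qm * FPR - qp * FNR) (hFNRlt : FNR < 1)
    (hf1 : f1 = (qm * FPR + qp * FNR) / (2 * qp + qm * FPR - qp * FNR)) :
    qm * FPR + qp * FNR ≤ 2 * f1 / (1 + f1) :=
  weighted_loss_le_f1_ratio_case2_general qp qm FPR FNR f1 hqp0 hqm0 hsum hFPR0 hFPR1 hFNR0 hD hf1
end

section
/- (Optimal tree after removing instances stays in the full-data Rashomon set) Let t* minimize Obj(·, full) over a class T of trees and let t̃* minimize Obj(·, reduced) over T, where the reduced dataset removes the |K| points indexed by K (|K| < n). Then Obj(t̃*, full) ≤ Obj(t*, full) + 2|K|/n. Consequently, if ε ≥ 2|K|/(n·Obj(t*, full)), then t̃* belongs to the ε-Rashomon set {t ∈ T : Obj(t, full) ≤ (1+ε)·Obj(t*, full)}. -/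
/-- Full-data objective of tree with per-point misclassification `miss`. -/
noncomputable def objFull (n : ℕ) (miss : Fin n → ℝ) (lam H : ℝ) : ℝ :=
  (1 / (n : ℝ)) * ∑ i, miss i + lam * H

/-- Reduced-data objective after removing the points indexed by `K`. -/
noncomputable def objRed (n : ℕ) (K : Finset (Fin n)) (miss : Fin n → ℝ) (lam H : ℝ) : ℝ :=
  (1 / ((n : ℝ) - K.card)) * ∑ i ∈ Kᶜ, miss i + lam * H

/-! Removing `k` of `N` points whose losses lie in `[0, 1]` moves the average loss by at most
`k / N` in either direction: with `a ∈ [0, N - k]` the loss kept and `b ∈ [0, k]` the loss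
removed, the full average is `(a + b) / N` and the reduced one `a / (N - k)`. The regularisation
term is common to both objectives, so
`Obj(t̃*, full) ≤ Obj(t̃*, red) + k/n ≤ Obj(t*, red) + k/n ≤ Obj(t*, full) + 2k/n`,
and the Rashomon membership is this bound divided by `Obj(t*, full) > 0`. -/

section Perturbation

variable {a b k N : ℝ}

lemma add_div_le_div_sub_add_div (ha : 0 ≤ a) (hb : b ≤ k) (hk : 0 ≤ k) (hkN : k < N) :
    (a + b) / N ≤ a / (N - k) + k / N := by
  have hN : 0 < N := hk.trans_lt hkN
  calc (a + b) / N ≤ a / N + k / N := by rw [add_div]; gcongr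
    _ ≤ a / (N - k) + k / N := by
      have : 0 < N - k := sub_pos.2 hkN
      gcongr
      exact sub_le_self N hk

lemma div_sub_le_add_div_add_div (ha : a ≤ N - k) (hb : 0 ≤ b) (hk : 0 ≤ k) (hkN : k < N) :
    a / (N - k) ≤ (a + b) / N + k / N := by
  have hN : 0 < N := hk.trans_lt hkN
  have hNk : 0 < N - k := sub_pos.2 hkN
  -- `a / (N - k) - a / N = a k / (N (N - k)) ≤ k / N` because `a ≤ N - k`
  rw [← add_div, div_le_div_iff₀ hNk hN]
  nlinarith [mul_le_mul_of_nonneg_right ha hk]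

end Perturbation

section Objectives

variable {n : ℕ} {K : Finset (Fin n)} {m : Fin n → ℝ}

lemma sum_compl_le_sub_card_of_le_one (h1 : ∀ i, m i ≤ 1) :
    ∑ i ∈ Kᶜ, m i ≤ (n : ℝ) - K.card := by
  have hcard : ((Kᶜ.card : ℕ) : ℝ) = (n : ℝ) - K.card := by
    rw [Finset.card_compl, Fintype.card_fin, Nat.cast_sub (by simpa using K.card_le_univ)]
  simpa [hcard] using Finset.sum_le_card_nsmul Kᶜ m 1 fun i _ => h1 i

lemma sum_le_card_of_le_one (h1 : ∀ i, m i ≤ 1) : ∑ i ∈ K, m i ≤ K.card := by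
  simpa using Finset.sum_le_card_nsmul K m 1 fun i _ => h1 i

lemma objFull_le_objRed_add (hK : K.card < n) (h0 : ∀ i, 0 ≤ m i) (h1 : ∀ i, m i ≤ 1)
    (lam H : ℝ) : objFull n m lam H ≤ objRed n K m lam H + K.card / n := by
  have h := add_div_le_div_sub_add_div (Finset.sum_nonneg fun i (_ : i ∈ Kᶜ) => h0 i)
    (sum_le_card_of_le_one h1) K.card.cast_nonneg (Nat.cast_lt.2 hK)
  rw [Finset.sum_compl_add_sum] at h
  simp only [objFull, objRed, one_div_mul_eq_div]
  linarith

lemma objRed_le_objFull_add (hK : K.card < n) (h0 : ∀ i, 0 ≤ m i) (h1 : ∀ i, m i ≤ 1)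
    (lam H : ℝ) : objRed n K m lam H ≤ objFull n m lam H + K.card / n := by
  have h := div_sub_le_add_div_add_div (sum_compl_le_sub_card_of_le_one h1)
    (Finset.sum_nonneg fun i (_ : i ∈ K) => h0 i) K.card.cast_nonneg (Nat.cast_lt.2 hK)
  rw [Finset.sum_compl_add_sum] at h
  simp only [objFull, objRed, one_div_mul_eq_div]
  linarith

end Objectives

lemma le_one_add_mul_of_le_add {x F c ε : ℝ} (hx : x ≤ F + c) (hF : 0 < F)
    (hε : c / F ≤ ε) : x ≤ (1 + ε) * F := by
  rw [div_le_iff₀ hF] at hε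
  linarith

theorem opt_tree_after_removal_in_rashomon_general
    {T : Type*} (n : ℕ) (K : Finset (Fin n)) (hK : K.card < n)
    (miss : T → Fin n → ℝ) (hmiss : ∀ t i, miss t i = 0 ∨ miss t i = 1)
    (lam : ℝ) (H : T → ℝ)
    (tstar ttil : T)
    (htil : ∀ t, objRed n K (miss ttil) lam (H ttil) ≤ objRed n K (miss t) lam (H t)) :
    objFull n (miss ttil) lam (H ttil)
        ≤ objFull n (miss tstar) lam (H tstar) + 2 * K.card / n ∧
    (0 < objFull n (miss tstar) lam (H tstar) →
      ∀ ε : ℝ, ε ≥ 2 * K.card / (n * objFull n (miss tstar) lam (H tstar)) →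
        objFull n (miss ttil) lam (H ttil)
          ≤ (1 + ε) * objFull n (miss tstar) lam (H tstar)) := by
  have h0 : ∀ t i, 0 ≤ miss t i := fun t i => by rcases hmiss t i with h | h <;> simp [h]
  have h1 : ∀ t i, miss t i ≤ 1 := fun t i => by rcases hmiss t i with h | h <;> simp [h]
  have hmain : objFull n (miss ttil) lam (H ttil)
      ≤ objFull n (miss tstar) lam (H tstar) + 2 * K.card / n :=
    calc objFull n (miss ttil) lam (H ttil)
        ≤ objRed n K (miss ttil) lam (H ttil) + K.card / n :=
          objFull_le_objRed_add hK (h0 ttil) (h1 ttil) lam _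
      _ ≤ objRed n K (miss tstar) lam (H tstar) + K.card / n := by linarith [htil tstar]
      _ ≤ objFull n (miss tstar) lam (H tstar) + K.card / n + K.card / n := by
          gcongr; exact objRed_le_objFull_add hK (h0 tstar) (h1 tstar) lam _
      _ = objFull n (miss tstar) lam (H tstar) + 2 * K.card / n := by ring
  refine ⟨hmain, fun hpos ε hε => le_one_add_mul_of_le_add hmain hpos ?_⟩
  rw [div_div]
  exact hε

/-- Optimal tree after removing a group of instances is still in the
full-dataset Rashomon set: if `tstar` minimizes the full objective and
`ttil` minimizes the reduced objective, then
`objFull ttil ≤ objFull tstar + 2|K|/n`; hence if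
`ε ≥ 2|K|/(n · objFull tstar)`, `ttil` is in the ε-Rashomon set. -/
theorem opt_tree_after_removal_in_rashomon
    {T : Type*} (n : ℕ) (hn : 0 < n) (K : Finset (Fin n)) (hK : K.card < n)
    (miss : T → Fin n → ℝ) (hmiss : ∀ t i, miss t i = 0 ∨ miss t i = 1)
    (lam : ℝ) (H : T → ℝ)
    (tstar ttil : T)
    (hstar : ∀ t, objFull n (miss tstar) lam (H tstar) ≤ objFull n (miss t) lam (H t))
    (htil : ∀ t, objRed n K (miss ttil) lam (H ttil) ≤ objRed n K (miss t) lam (H t)) :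
    objFull n (miss ttil) lam (H ttil)
        ≤ objFull n (miss tstar) lam (H tstar) + 2 * K.card / n ∧
    (0 < objFull n (miss tstar) lam (H tstar) →
      ∀ ε : ℝ, ε ≥ 2 * K.card / (n * objFull n (miss tstar) lam (H tstar)) →
        objFull n (miss ttil) lam (H ttil)
          ≤ (1 + ε) * objFull n (miss tstar) lam (H tstar)) :=
  opt_tree_after_removal_in_rashomon_general n K hK miss hmiss lam H tstar ttil htil
end

section
/- (Reduced-data Rashomon set contained in full-data Rashomon set) With notation as before, suppose t ∈ T satisfies Obj(t, reduced) ≤ (1+ε')·Obj(t̃*, reduced) where t̃* is optimal on the reduced data. Then Obj(t, full) ≤ (1+ε')·Obj(t*, full) + (2+ε')·|K|/n. Consequently, if ε ≥ ε' + (2+ε')·|K|/(n·Obj(t*, full)), then t lies in the full-data ε-Rashomon set {t : Obj(t, full) ≤ (1+ε)·Obj(t*, full)}. -/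
/-!
Removing the points of `K` changes the average loss by at most `|K|/n`: the full average is
`((n - |K|) r + b) / n`, where `r ∈ [0, 1]` is the reduced average and `b ∈ [0, |K|]` the loss
on `K`. With `c = |K|/n`, the two passages between full and reduced data in
`Obj(t) ≤ Obj~(t) + c ≤ (1+ε') Obj~(t̃*) + c ≤ (1+ε') Obj~(t*) + c ≤ (1+ε') (Obj(t*) + c) + c`
account for the additive `(2+ε') c`.
-/

open Finset

section Objective

variable {n : ℕ} {K : Finset (Fin n)} {f : Fin n → ℝ}

lemma sum_compl_le_sub_card (hK : K.card < n) (hf1 : ∀ i, f i ≤ 1) :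
    ∑ i ∈ Kᶜ, f i ≤ (n : ℝ) - K.card := by
  have hcard : ((Kᶜ).card : ℝ) = (n : ℝ) - K.card := by
    rw [card_compl, Fintype.card_fin, Nat.cast_sub hK.le]
  simpa [hcard] using sum_le_card_nsmul Kᶜ f 1 fun i _ => hf1 i

lemma sum_le_card (hf1 : ∀ i, f i ≤ 1) : ∑ i ∈ K, f i ≤ K.card := by
  simpa using sum_le_card_nsmul K f 1 fun i _ => hf1 i

lemma objFull_sub_objRed (hK : K.card < n) (lam H : ℝ) :
    objFull n f lam H - objRed n K f lam H
      = (∑ i ∈ K, f i - K.card * (∑ i ∈ Kᶜ, f i / ((n : ℝ) - K.card))) / n := by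
  have hn : (0 : ℝ) < n := by exact_mod_cast (Nat.zero_le _).trans_lt hK
  have hnK : (0 : ℝ) < (n : ℝ) - K.card := sub_pos.2 (by exact_mod_cast hK)
  rw [objFull, objRed, ← sum_add_sum_compl K f, ← sum_div]
  field_simp
  ring

lemma abs_objFull_sub_objRed_le (hK : K.card < n) (hf0 : ∀ i, 0 ≤ f i) (hf1 : ∀ i, f i ≤ 1)
    (lam H : ℝ) : |objFull n f lam H - objRed n K f lam H| ≤ K.card / n := by
  have hnK : (0 : ℝ) < (n : ℝ) - K.card := sub_pos.2 (by exact_mod_cast hK)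
  have hb0 : 0 ≤ ∑ i ∈ K, f i := sum_nonneg fun i _ => hf0 i
  have hb1 : ∑ i ∈ K, f i ≤ K.card := sum_le_card hf1
  have hr0 : 0 ≤ ∑ i ∈ Kᶜ, f i / ((n : ℝ) - K.card) := by
    rw [← sum_div]; exact div_nonneg (sum_nonneg fun i _ => hf0 i) hnK.le
  have hr1 : ∑ i ∈ Kᶜ, f i / ((n : ℝ) - K.card) ≤ 1 := by
    rw [← sum_div]; exact (div_le_one hnK).2 (sum_compl_le_sub_card hK hf1)
  have hm : (0 : ℝ) ≤ K.card := K.card.cast_nonneg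
  rw [objFull_sub_objRed hK, abs_div, Nat.abs_cast]
  gcongr
  rw [abs_sub_le_iff]
  constructor <;> nlinarith

end Objective

theorem reduced_rashomon_subset_full_rashomon_general
    {T : Type*} (n : ℕ) (K : Finset (Fin n)) (hK : K.card < n)
    (miss : T → Fin n → ℝ) (hmiss : ∀ t i, miss t i = 0 ∨ miss t i = 1)
    (lam : ℝ) (H : T → ℝ)
    (tstar ttil t : T) (ε' : ℝ) (hε' : 0 ≤ ε')
    (htil : ∀ s, objRed n K (miss ttil) lam (H ttil) ≤ objRed n K (miss s) lam (H s))
    (ht : objRed n K (miss t) lam (H t)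
        ≤ (1 + ε') * objRed n K (miss ttil) lam (H ttil)) :
    objFull n (miss t) lam (H t)
        ≤ (1 + ε') * objFull n (miss tstar) lam (H tstar) + (2 + ε') * K.card / n ∧
    (0 < objFull n (miss tstar) lam (H tstar) →
      ∀ ε : ℝ, ε ≥ ε' + (2 + ε') * K.card / (n * objFull n (miss tstar) lam (H tstar)) →
        objFull n (miss t) lam (H t)
          ≤ (1 + ε) * objFull n (miss tstar) lam (H tstar)) := by
  have hmiss01 (s : T) (i : Fin n) : 0 ≤ miss s i ∧ miss s i ≤ 1 := by
    rcases hmiss s i with h | h <;> simp [h]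
  have hgap (s : T) := abs_sub_le_iff.1 <| abs_objFull_sub_objRed_le hK
    (fun i => (hmiss01 s i).1) (fun i => (hmiss01 s i).2) lam (H s)
  set O := objFull n (miss tstar) lam (H tstar)
  set c : ℝ := K.card / n
  have hbound : objFull n (miss t) lam (H t) ≤ (1 + ε') * O + (2 + ε') * K.card / n :=
    calc objFull n (miss t) lam (H t)
        ≤ objRed n K (miss t) lam (H t) + c := by linarith [(hgap t).1]
      _ ≤ (1 + ε') * objRed n K (miss tstar) lam (H tstar) + c := by
        gcongr; exact ht.trans (by gcongr; exact htil tstar)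
      _ ≤ (1 + ε') * (O + c) + c := by gcongr; linarith [(hgap tstar).2]
      _ = (1 + ε') * O + (2 + ε') * K.card / n := by ring
  refine ⟨hbound, fun hO ε hε => hbound.trans ?_⟩
  have hslack : (2 + ε') * K.card / n = (2 + ε') * K.card / (n * O) * O := by
    field_simp
  rw [hslack]
  linarith [mul_le_mul_of_nonneg_right hε hO.le]

/-- Rashomon set after removing a group of instances is within the
full-dataset Rashomon set: if `t` is in the ε'-Rashomon set of the reduced
data, then `objFull t ≤ (1+ε') objFull tstar + (2+ε')|K|/n`; hence if
`ε ≥ ε' + (2+ε')|K|/(n · objFull tstar)`, `t` lies in the full-data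
ε-Rashomon set. -/
theorem reduced_rashomon_subset_full_rashomon
    {T : Type*} (n : ℕ) (hn : 0 < n) (K : Finset (Fin n)) (hK : K.card < n)
    (miss : T → Fin n → ℝ) (hmiss : ∀ t i, miss t i = 0 ∨ miss t i = 1)
    (lam : ℝ) (H : T → ℝ)
    (tstar ttil t : T) (ε' : ℝ) (hε' : 0 ≤ ε')
    (hstar : ∀ s, objFull n (miss tstar) lam (H tstar) ≤ objFull n (miss s) lam (H s))
    (htil : ∀ s, objRed n K (miss ttil) lam (H ttil) ≤ objRed n K (miss s) lam (H s))
    (ht : objRed n K (miss t) lam (H t)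
        ≤ (1 + ε') * objRed n K (miss ttil) lam (H ttil)) :
    objFull n (miss t) lam (H t)
        ≤ (1 + ε') * objFull n (miss tstar) lam (H tstar) + (2 + ε') * K.card / n ∧
    (0 < objFull n (miss tstar) lam (H tstar) →
      ∀ ε : ℝ, ε ≥ ε' + (2 + ε') * K.card / (n * objFull n (miss tstar) lam (H tstar)) →
        objFull n (miss t) lam (H t)
          ≤ (1 + ε) * objFull n (miss tstar) lam (H tstar)) :=
  reduced_rashomon_subset_full_rashomon_general n K hK miss hmiss lam H tstar ttil t ε' hε' htil ht
end
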